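/- The branching order is stable under merging: if B1 ≽ B1', B2 ≽ B2', and merge B1 B2 B, then there exists B' with merge B1' B2' B' and B ≽ B'. -/
import Mathlib


/-- Behaviours of Stateful Processes. Labels `left`/`right` are modelled as
`Bool` (`true` = left, `false` = right). -/
inductive Beh (P E V X : Type) : Type
  | endB : Beh P E V X
  | send : P → E → Beh P E V X → Beh P E V X
  | recv : P → V → Beh P E V X → Beh P E V X
  | sel : P → Bool → Beh P E V X → Beh P E V X
  | branch : P → Option (Beh P E V X) → Option (Beh P E V X) → Beh P E V X
  | cond : E → Beh P E V X → Beh P E V X → Beh P E V X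
  | call : X → Beh P E V X

mutual
/-- The merge relation on behaviours. -/
inductive merge {P E V X : Type} :
    Beh P E V X → Beh P E V X → Beh P E V X → Prop
  | endB : merge .endB .endB .endB
  | send {B1 B2 B} (p : P) (e : E) :
      merge B1 B2 B → merge (.send p e B1) (.send p e B2) (.send p e B)
  | recv {B1 B2 B} (p : P) (x : V) :
      merge B1 B2 B → merge (.recv p x B1) (.recv p x B2) (.recv p x B)
  | sel {B1 B2 B} (p : P) (l : Bool) :
      merge B1 B2 B → merge (.sel p l B1) (.sel p l B2) (.sel p l B)
  | branch {l1 l2 l r1 r2 r} (p : P) :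
      omerge l1 l2 l → omerge r1 r2 r →
      merge (.branch p l1 r1) (.branch p l2 r2) (.branch p l r)
  | cond {Bt1 Bt2 Bt Be1 Be2 Be} (e : E) :
      merge Bt1 Bt2 Bt → merge Be1 Be2 Be →
      merge (.cond e Bt1 Be1) (.cond e Bt2 Be2) (.cond e Bt Be)
  | call (x : X) : merge (.call x) (.call x) (.call x)

/-- Componentwise merge of optional behaviours. -/
inductive omerge {P E V X : Type} :
    Option (Beh P E V X) → Option (Beh P E V X) → Option (Beh P E V X) → Prop
  | nn : omerge none none none
  | sn (b : Beh P E V X) : omerge (some b) none (some b)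
  | ns (b : Beh P E V X) : omerge none (some b) (some b)
  | ss {b1 b2 b : Beh P E V X} : merge b1 b2 b → omerge (some b1) (some b2) (some b)
end

mutual
/-- The branching order on behaviours: `mb B B'` means `B` offers at least the
branches of `B'` (written `B ≽ B'`). -/
inductive mb {P E V X : Type} : Beh P E V X → Beh P E V X → Prop
  | endB : mb .endB .endB
  | send {B B'} (p : P) (e : E) : mb B B' → mb (.send p e B) (.send p e B')
  | recv {B B'} (p : P) (x : V) : mb B B' → mb (.recv p x B) (.recv p x B')
  | sel {B B'} (p : P) (l : Bool) : mb B B' → mb (.sel p l B) (.sel p l B')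
  | branch_nn (p : P) (mL mR : Option (Beh P E V X)) :
      mb (.branch p mL mR) (.branch p none none)
  | branch_ns {Br Br'} (p : P) (mL : Option (Beh P E V X)) :
      mb Br Br' → mb (.branch p mL (some Br)) (.branch p none (some Br'))
  | branch_sn {Bl Bl'} (p : P) (mR : Option (Beh P E V X)) :
      mb Bl Bl' → mb (.branch p (some Bl) mR) (.branch p (some Bl') none)
  | branch_ss {Bl Bl' Br Br'} (p : P) :
      mb Bl Bl' → mb Br Br' →
      mb (.branch p (some Bl) (some Br)) (.branch p (some Bl') (some Br'))
  | cond {B1 B1' B2 B2'} (e : E) :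
      mb B1 B1' → mb B2 B2' → mb (.cond e B1 B2) (.cond e B1' B2')
  | call (x : X) : mb (.call x) (.call x)
end

theorem mb_trans {P E V X : Type} {a b c : Beh P E V X} (h1 : mb a b) (h2 : mb b c) : mb a c := by
  induction h1 generalizing c <;> cases h2 <;> constructor <;> solve_by_elim

inductive omb {P E V X : Type} : Option (Beh P E V X) → Option (Beh P E V X) → Prop
  | n (m) : omb m none
  | s {b b'} : mb b b' → omb (some b) (some b')

theorem mb_refl {P E V X : Type} : ∀ b : Beh P E V X, mb b b
  | .endB => .endB
  | .send p e b => .send p e (mb_refl b)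
  | .recv p x b => .recv p x (mb_refl b)
  | .sel p l b => .sel p l (mb_refl b)
  | .cond e a b => .cond e (mb_refl a) (mb_refl b)
  | .call x => .call x
  | .branch p none none => .branch_nn p none none
  | .branch p none (some r) => .branch_ns p none (mb_refl r)
  | .branch p (some l) none => .branch_sn p none (mb_refl l)
  | .branch p (some l) (some r) => .branch_ss p (mb_refl l) (mb_refl r)

theorem merge_mb {P E V X : Type} {b1 b2 b : Beh P E V X} (h : merge b1 b2 b) :
    mb b b1 ∧ mb b b2 := by
  induction h using merge.rec
    (motive_2 := fun m1 m2 m _ => omb m m1 ∧ omb m m2) with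
  | branch p hl hr ihl ihr =>
    obtain ⟨hl1, hl2⟩ := ihl; obtain ⟨hr1, hr2⟩ := ihr
    constructor <;> [cases hl1 <;> cases hr1; cases hl2 <;> cases hr2] <;>
      constructor <;> solve_by_elim
  | nn => exact ⟨omb.n _, omb.n _⟩
  | sn b => exact ⟨omb.s (mb_refl b), omb.n _⟩
  | ns b => exact ⟨omb.n _, omb.s (mb_refl b)⟩
  | ss h ih => exact ⟨omb.s ih.1, omb.s ih.2⟩
  | _ => constructor <;> constructor <;> simp_all

theorem mb_branch_inv {P E V X : Type} {p : P} {l r : Option (Beh P E V X)}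
    {T : Beh P E V X} (h : mb (.branch p l r) T) :
    ∃ l' r', T = .branch p l' r' ∧ omb l l' ∧ omb r r' := by
  cases h with
  | branch_nn => exact ⟨none, none, rfl, .n _, .n _⟩
  | branch_ns p mL hr => exact ⟨none, _, rfl, .n _, .s hr⟩
  | branch_sn p mR hl => exact ⟨_, none, rfl, .s hl, .n _⟩
  | branch_ss p hl hr => exact ⟨_, _, rfl, .s hl, .s hr⟩

theorem omb_branch {P E V X : Type} (p : P) {l l' r r' : Option (Beh P E V X)}
    (hl : omb l l') (hr : omb r r') : mb (Beh.branch p l r) (.branch p l' r') := by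
  cases hl <;> cases hr <;> constructor <;> assumption

theorem stmt14' {P E V X : Type} {B1 B2 B : Beh P E V X}
    (h : merge B1 B2 B) : ∀ B1' B2' : Beh P E V X, mb B1 B1' → mb B2 B2' →
    ∃ B' : Beh P E V X, merge B1' B2' B' ∧ mb B B' := by
  induction h using merge.rec
    (motive_2 := fun m1 m2 m _ => ∀ m1' m2', omb m1 m1' → omb m2 m2' →
      ∃ m', omerge m1' m2' m' ∧ omb m m') with
  | endB => intro _ _ h1 h2; cases h1; cases h2; exact ⟨_, .endB, .endB⟩
  | send p e hm ih =>
    intro _ _ h1 h2; cases h1; cases h2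
    obtain ⟨b', hb, hmb⟩ := ih _ _ ‹_› ‹_›
    exact ⟨_, .send p e hb, .send p e hmb⟩
  | recv p x hm ih =>
    intro _ _ h1 h2; cases h1; cases h2
    obtain ⟨b', hb, hmb⟩ := ih _ _ ‹_› ‹_›
    exact ⟨_, .recv p x hb, .recv p x hmb⟩
  | sel p l hm ih =>
    intro _ _ h1 h2; cases h1; cases h2
    obtain ⟨b', hb, hmb⟩ := ih _ _ ‹_› ‹_›
    exact ⟨_, .sel p l hb, .sel p l hmb⟩
  | cond e hmt hme iht ihe =>
    intro _ _ h1 h2; cases h1; cases h2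
    obtain ⟨bt', hbt, hmbt⟩ := iht _ _ ‹_› ‹_›
    obtain ⟨be', hbe, hmbe⟩ := ihe _ _ ‹_› ‹_›
    exact ⟨_, .cond e hbt hbe, .cond e hmbt hmbe⟩
  | call x => intro _ _ h1 h2; cases h1; cases h2; exact ⟨_, .call x, .call x⟩
  | branch p hl hr ihl ihr =>
    intro _ _ h1 h2
    obtain ⟨l1', r1', rfl, o1, o2⟩ := mb_branch_inv h1
    obtain ⟨l2', r2', rfl, o3, o4⟩ := mb_branch_inv h2
    obtain ⟨l', hl', ol⟩ := ihl _ _ o1 o3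
    obtain ⟨r', hr', or⟩ := ihr _ _ o2 o4
    exact ⟨_, .branch p hl' hr', omb_branch p ol or⟩
  | nn => rename_i h1 h2; cases h1; cases h2; exact ⟨none, .nn, .n _⟩
  | sn b =>
    rename_i h1 h2; cases h2
    cases h1 with
    | n => exact ⟨none, .nn, .n _⟩
    | s hb => exact ⟨_, .sn _, .s hb⟩
  | ns b =>
    rename_i h1 h2; cases h1
    cases h2 with
    | n => exact ⟨none, .nn, .n _⟩
    | s hb => exact ⟨_, .ns _, .s hb⟩
  | ss hm ih =>
    rename_i h1 h2
    cases h1 with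
    | n =>
      cases h2 with
      | n => exact ⟨none, .nn, .n _⟩
      | s hb => exact ⟨_, .ns _, .s (mb_trans (merge_mb hm).2 hb)⟩
    | s hb1 =>
      cases h2 with
      | n => exact ⟨_, .sn _, .s (mb_trans (merge_mb hm).1 hb1)⟩
      | s hb2 =>
        obtain ⟨b', hb', hmb⟩ := ih _ _ hb1 hb2
        exact ⟨_, .ss hb', .s hmb⟩

theorem stmt14 {P E V X : Type} {B1 B1' B2 B2' B : Beh P E V X}
    (h1 : mb B1 B1') (h2 : mb B2 B2') (h : merge B1 B2 B) :
    ∃ B' : Beh P E V X, merge B1' B2' B' ∧ mb B B' :=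
  stmt14' h _ _ h1 h2
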